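/- arXiv:1611.10002 — 2 statements merged into one kernel-verified Lean document; each statement's English description precedes it below -/
import Mathlib

section
/- Let p, h > 0, c = cosh(p h), s = sinh(p h), and θ = (s - p h)/(2(p c h - s)). Then 0 < θ < 1/2. -/
lemma sinh_lt_mul_cosh {t : ℝ} (ht : 0 < t) : Real.sinh t < t * Real.cosh t := by
  have hmono : StrictMonoOn (fun x => x * Real.cosh x - Real.sinh x) (Set.Ici 0) := by
    refine strictMonoOn_of_deriv_pos (convex_Ici _) ?_ ?_
    · exact ((continuous_id.mul Real.continuous_cosh).sub Real.continuous_sinh).continuousOn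
    · intro x hx
      rw [interior_Ici, Set.mem_Ioi] at hx
      have : HasDerivAt (fun x => x * Real.cosh x - Real.sinh x)
          (1 * Real.cosh x + x * Real.sinh x - Real.cosh x) x :=
        ((hasDerivAt_id x).mul (Real.hasDerivAt_cosh x)).sub (Real.hasDerivAt_sinh x)
      rw [this.deriv]
      have := Real.sinh_pos_iff.2 hx
      nlinarith
  have h0 : (fun x => x * Real.cosh x - Real.sinh x) 0 <
      (fun x => x * Real.cosh x - Real.sinh x) t :=
    hmono (Set.self_mem_Ici) (le_of_lt ht) ht
  simp at h0
  linarith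

lemma two_sinh_lt {t : ℝ} (ht : 0 < t) : 2 * Real.sinh t < t * (1 + Real.cosh t) := by
  have hu : 0 < t / 2 := by linarith
  have h1 : Real.sinh (t / 2) < (t / 2) * Real.cosh (t / 2) := sinh_lt_mul_cosh hu
  have h2 : Real.sinh t = 2 * Real.sinh (t / 2) * Real.cosh (t / 2) := by
    rw [show t = 2 * (t / 2) by ring, Real.sinh_two_mul]; ring_nf
  have h3 : Real.cosh t = Real.cosh (t / 2) ^ 2 + Real.sinh (t / 2) ^ 2 := by
    rw [show t = 2 * (t / 2) by ring, Real.cosh_two_mul]; ring_nf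
  have h4 : Real.cosh (t / 2) ^ 2 = Real.sinh (t / 2) ^ 2 + 1 := Real.cosh_sq _
  have h5 : (0:ℝ) < Real.cosh (t / 2) := Real.cosh_pos _
  nlinarith

theorem theta_bounds (p h : ℝ) (hp : 0 < p) (hh : 0 < h) :
    0 < (Real.sinh (p * h) - p * h) /
          (2 * (p * Real.cosh (p * h) * h - Real.sinh (p * h))) ∧
    (Real.sinh (p * h) - p * h) /
          (2 * (p * Real.cosh (p * h) * h - Real.sinh (p * h))) < 1 / 2 := by
  set t := p * h with ht
  have htpos : 0 < t := mul_pos hp hh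
  have hnum : 0 < Real.sinh t - t := by
    have := Real.self_lt_sinh_iff.2 htpos
    linarith
  have hden' : Real.sinh t < t * Real.cosh t := sinh_lt_mul_cosh htpos
  have hden : 0 < 2 * (p * Real.cosh (p * h) * h - Real.sinh (p * h)) := by
    have : p * Real.cosh (p * h) * h = t * Real.cosh t := by rw [ht]; ring
    rw [this]; linarith
  constructor
  · exact div_pos hnum hden
  · rw [div_lt_div_iff₀ hden (by norm_num)]
    have h2 := two_sinh_lt htpos
    have : p * Real.cosh (p * h) * h = t * Real.cosh t := by rw [ht]; ring
    rw [this]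
    nlinarith
end

section
/- Let N ≥ 2 and θ ∈ ℝ with |θ| < 1/2, ω ≠ 0. The N×N matrix Ψ with Ψ₁₁ = Ψ_NN = ω, Ψ_{1,2} = Ψ_{N,N-1} = θ, Ψ_{2,1} = Ψ_{N-1,N} = 0, Ψ_{ii} = 1 and Ψ_{i,i±1} = θ for 2 ≤ i ≤ N-1, and all other entries 0, is invertible. -/
theorem collocation_matrix_invertible (N : ℕ) (hN : 2 ≤ N) (θ ω : ℝ)
    (hθ : |θ| < 1 / 2) (hω : ω ≠ 0) :
    IsUnit (Matrix.of (fun i j : Fin N =>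
      if i = j then (if i.val = 0 ∨ i.val = N - 1 then ω else 1)
      else if j.val = i.val + 1 then (if i.val = N - 2 then 0 else θ)
      else if i.val = j.val + 1 then (if i.val = 1 then 0 else θ)
      else 0)) := by
  set A : Matrix (Fin N) (Fin N) ℝ := Matrix.of (fun i j : Fin N =>
      if i = j then (if i.val = 0 ∨ i.val = N - 1 then ω else 1)
      else if j.val = i.val + 1 then (if i.val = N - 2 then 0 else θ)
      else if i.val = j.val + 1 then (if i.val = 1 then 0 else θ)
      else 0) with hA
  rw [Matrix.isUnit_iff_isUnit_det, isUnit_iff_ne_zero]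
  apply det_ne_zero_of_sum_col_lt_diag
  intro k
  have hkN : (k : ℕ) < N := k.isLt
  by_cases hk0 : (k : ℕ) = 0
  · have hz : ∀ i ∈ Finset.univ.erase k, ‖A i k‖ = 0 := by
      intro i hi
      have hik : i ≠ k := (Finset.mem_erase.mp hi).1
      have hiv : (i : ℕ) ≠ 0 := by
        intro h; exact hik (Fin.ext (h.trans hk0.symm))
      simp only [hA, Matrix.of_apply, if_neg hik]
      by_cases h1 : (i : ℕ) = (k : ℕ) + 1
      · rw [if_neg (by omega), if_pos h1, if_pos (by omega)]
        simp
      · rw [if_neg (by omega), if_neg h1]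
        simp
    rw [Finset.sum_eq_zero hz]
    have hdiag : A k k = ω := by
      simp [hA, hk0]
    rw [hdiag]
    simpa using hω
  · by_cases hkN1 : (k : ℕ) = N - 1
    · have hz : ∀ i ∈ Finset.univ.erase k, ‖A i k‖ = 0 := by
        intro i hi
        have hik : i ≠ k := (Finset.mem_erase.mp hi).1
        have hiv : (i : ℕ) ≠ N - 1 := by
          intro h; exact hik (Fin.ext (h.trans hkN1.symm))
        have hiN : (i : ℕ) < N := i.isLt
        simp only [hA, Matrix.of_apply, if_neg hik, hkN1]
        by_cases h1 : N - 1 = (i : ℕ) + 1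
        · rw [if_pos h1, if_pos (by omega)]
          simp
        · rw [if_neg h1, if_neg (by omega)]
          simp
      rw [Finset.sum_eq_zero hz]
      have hdiag : A k k = ω := by
        simp [hA, hkN1]
      rw [hdiag]
      simpa using hω
    · -- interior column: 1 ≤ k ≤ N-2
      have hk1 : 1 ≤ (k : ℕ) := by omega
      have hk2 : (k : ℕ) + 1 < N := by omega
      have hN3 : 3 ≤ N := by omega
      have h0 : (k : ℕ) - 1 < N := by omega
      set i₁ : Fin N := ⟨(k : ℕ) - 1, h0⟩ with hi₁
      set i₂ : Fin N := ⟨(k : ℕ) + 1, hk2⟩ with hi₂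
      have v1 : (i₁ : ℕ) = (k : ℕ) - 1 := rfl
      have v2 : (i₂ : ℕ) = (k : ℕ) + 1 := rfl
      have h1mem : i₁ ∈ Finset.univ.erase k := by
        refine Finset.mem_erase.mpr ⟨?_, Finset.mem_univ _⟩
        intro h
        have := congrArg Fin.val h
        rw [v1] at this
        omega
      have h2mem : i₂ ∈ Finset.univ.erase k := by
        refine Finset.mem_erase.mpr ⟨?_, Finset.mem_univ _⟩
        intro h
        have := congrArg Fin.val h
        rw [v2] at this
        omega
      have h12 : i₁ ≠ i₂ := by
        intro h
        have := congrArg Fin.val h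
        rw [v1, v2] at this
        omega
      have hsum : ∑ i ∈ Finset.univ.erase k, ‖A i k‖ = ‖A i₁ k‖ + ‖A i₂ k‖ := by
        refine Finset.sum_eq_add_of_mem i₁ i₂ h1mem h2mem h12 ?_
        intro c hc ⟨hc1, hc2⟩
        have hck : c ≠ k := (Finset.mem_erase.mp hc).1
        have hcv : (c : ℕ) ≠ (k : ℕ) := fun h => hck (Fin.ext h)
        have hcv1 : (c : ℕ) ≠ (k : ℕ) - 1 := fun h => hc1 (Fin.ext (h.trans v1.symm))
        have hcv2 : (c : ℕ) ≠ (k : ℕ) + 1 := fun h => hc2 (Fin.ext (h.trans v2.symm))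
        simp only [hA, Matrix.of_apply, if_neg hck]
        rw [if_neg (by omega), if_neg (by omega)]
        simp
      have hv1 : A i₁ k = θ := by
        have hne : i₁ ≠ k := (Finset.mem_erase.mp h1mem).1
        simp only [hA, Matrix.of_apply, hi₁, Fin.val_mk] at hne ⊢
        rw [if_neg hne, if_pos (by omega), if_neg (by omega)]
      have hv2 : A i₂ k = θ := by
        have hne : i₂ ≠ k := (Finset.mem_erase.mp h2mem).1
        simp only [hA, Matrix.of_apply, hi₂, Fin.val_mk] at hne ⊢
        rw [if_neg hne, if_neg (by omega), if_pos trivial, if_neg (by omega)]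
      have hdiag : A k k = 1 := by
        simp only [hA, Matrix.of_apply]
        rw [if_pos trivial, if_neg (by omega)]
      rw [hsum, hv1, hv2, hdiag]
      simp only [Real.norm_eq_abs]
      rw [abs_one]
      linarith
end
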